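/- arXiv:2312.12218 — 3 statements merged into one kernel-verified Lean document; each statement's English description precedes it below -/
import Mathlib

section
/- For n ≥ 4, the derivative of the generalized Jacobi polynomial P_n^{(-2,-2)}(ξ) = ((ξ²−1)/4)²·P_{n−4}^{(2,2)}(ξ) satisfies d/dξ P_n^{(-2,-2)}(ξ) = ((n−3)/2)·P_{n−1}^{(-1,-1)}(ξ). -/
open scoped BigOperators

/-- Classical Jacobi polynomial `P_n^{(a,b)}` with nonnegative integer parameters. -/
noncomputable def jacobiP (a b n : ℕ) (x : ℝ) : ℝ :=
  ∑ s ∈ Finset.range (n + 1),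
    (Nat.choose (n + a) (n - s) : ℝ) * (Nat.choose (n + b) s : ℝ) *
      ((x - 1) / 2) ^ s * ((x + 1) / 2) ^ (n - s)

/-- Legendre polynomial `L_n = P_n^{(0,0)}`. -/
noncomputable def legendreP (n : ℕ) (x : ℝ) : ℝ := jacobiP 0 0 n x

/-- Generalized Jacobi polynomial `P_n^{(-1,-1)}(ξ) = ((ξ²−1)/4)·P_{n−2}^{(1,1)}(ξ)` for `n ≥ 2`. -/
noncomputable def gJacobiM1 (n : ℕ) (x : ℝ) : ℝ := ((x ^ 2 - 1) / 4) * jacobiP 1 1 (n - 2) x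

/-- Generalized Jacobi polynomial `P_n^{(-2,-2)}(ξ) = ((ξ²−1)/4)²·P_{n−4}^{(2,2)}(ξ)` for `n ≥ 4`. -/
noncomputable def gJacobiM2 (n : ℕ) (x : ℝ) : ℝ := ((x ^ 2 - 1) / 4) ^ 2 * jacobiP 2 2 (n - 4) x

/-- `ψ_m(ξ) = (√(2(2m−1))/(m−1))·P_m^{(-1,-1)}(ξ)` for `m ≥ 2`. -/
noncomputable def psiF (m : ℕ) (x : ℝ) : ℝ :=
  (Real.sqrt (2 * (2 * (m : ℝ) - 1)) / ((m : ℝ) - 1)) * gJacobiM1 m x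

/-- `φ_n(ξ) = √((2n+1)/2)·L_n(ξ)`. -/
noncomputable def phiF (n : ℕ) (x : ℝ) : ℝ :=
  Real.sqrt ((2 * (n : ℝ) + 1) / 2) * legendreP n x

/-- `φ̃_m(ξ) = (√(8(2m−3))/((m−3)(m−2)))·P_m^{(-2,-2)}(ξ)` for `m ≥ 4`. -/
noncomputable def varphiF (m : ℕ) (x : ℝ) : ℝ :=
  (Real.sqrt (8 * (2 * (m : ℝ) - 3)) / (((m : ℝ) - 3) * ((m : ℝ) - 2))) * gJacobiM2 m x

/-!
Write `U = (ξ - 1)/2`, `V = (ξ + 1)/2`, so that `(ξ² - 1)/4 = U V` and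
`P_n^{(a,b)} = ∑_{i+j=n} C(n+a, j) C(n+b, i) U^i V^j`. Differentiating
`U^(a+1) V^(b+1) P_n^{(a+1,b+1)}` termwise and splitting the factor `n + 1 = i + j` of each
term of `P_{n+1}^{(a,b)}`, the identity `(k+1) C(N, k+1) = (N-k) C(N, k)` matches the two sums,
giving `((n+1)/2) U^a V^b P_{n+1}^{(a,b)}`. The theorem is the case `a = b = 1`.
-/

open Finset

theorem jacobiP_eq_sum_antidiagonal (a b n : ℕ) (x : ℝ) :
    jacobiP a b n x = ∑ p ∈ antidiagonal n,
      ((n + a).choose p.2 : ℝ) * ((n + b).choose p.1 : ℝ) *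
        ((x - 1) / 2) ^ p.1 * ((x + 1) / 2) ^ p.2 := by
  rw [jacobiP, Nat.sum_antidiagonal_eq_sum_range_succ_mk]

theorem hasDerivAt_shifted_pow_mul_pow (p q : ℕ) (x : ℝ) :
    HasDerivAt (fun y : ℝ => ((y - 1) / 2) ^ (p + 1) * ((y + 1) / 2) ^ (q + 1))
      (((p + 1 : ℕ) : ℝ) / 2 * ((x - 1) / 2) ^ p * ((x + 1) / 2) ^ (q + 1)
        + ((q + 1 : ℕ) : ℝ) / 2 * ((x - 1) / 2) ^ (p + 1) * ((x + 1) / 2) ^ q) x := by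
  have hU : HasDerivAt (fun y : ℝ => (y - 1) / 2) (1 / 2) x :=
    ((hasDerivAt_id x).sub_const 1).div_const 2
  have hV : HasDerivAt (fun y : ℝ => (y + 1) / 2) (1 / 2) x :=
    ((hasDerivAt_id x).add_const 1).div_const 2
  refine ((hU.fun_pow (p + 1)).fun_mul (hV.fun_pow (q + 1))).congr_deriv ?_
  rw [Nat.add_sub_cancel, Nat.add_sub_cancel]
  ring

section LoweringIdentity

variable {R : Type*} [CommSemiring R] (a b n : ℕ) (U V : R)

theorem sum_antidiagonal_succ_fst_mul_choose :
    ∑ p ∈ antidiagonal (n + 1), (p.1 : R) *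
        (((n + 1 + a).choose p.2 : R) * ((n + 1 + b).choose p.1 : R) * U ^ p.1 * V ^ p.2) =
      ∑ p ∈ antidiagonal n, ((n + (a + 1)).choose p.2 : R) * ((n + (b + 1)).choose p.1 : R) *
        ((p.2 + b + 1 : ℕ) : R) * U ^ (p.1 + 1) * V ^ p.2 := by
  rw [Nat.sum_antidiagonal_succ]
  simp only [Nat.cast_zero, zero_mul, zero_add]
  refine sum_congr rfl fun p hp => ?_
  have hpn : p.1 + p.2 = n := mem_antidiagonal.mp hp
  have hchoose : (n + 1 + b).choose (p.1 + 1) * (p.1 + 1) =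
      (n + (b + 1)).choose p.1 * (p.2 + b + 1) := by
    rw [Nat.choose_succ_right_eq, show n + 1 + b - p.1 = p.2 + b + 1 by omega,
      show n + 1 + b = n + (b + 1) by omega]
  calc _ = ((n + (a + 1)).choose p.2 : R) * (((n + 1 + b).choose (p.1 + 1) * (p.1 + 1) : ℕ) : R) *
        U ^ (p.1 + 1) * V ^ p.2 := by
        rw [show n + 1 + a = n + (a + 1) by omega]; push_cast; ring
    _ = _ := by rw [hchoose]; push_cast; ring

theorem sum_antidiagonal_succ_snd_mul_choose :
    ∑ p ∈ antidiagonal (n + 1), (p.2 : R) *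
        (((n + 1 + a).choose p.2 : R) * ((n + 1 + b).choose p.1 : R) * U ^ p.1 * V ^ p.2) =
      ∑ p ∈ antidiagonal n, ((n + (a + 1)).choose p.2 : R) * ((n + (b + 1)).choose p.1 : R) *
        ((p.1 + a + 1 : ℕ) : R) * U ^ p.1 * V ^ (p.2 + 1) := by
  rw [Nat.sum_antidiagonal_succ']
  simp only [Nat.cast_zero, zero_mul, zero_add]
  refine sum_congr rfl fun p hp => ?_
  have hpn : p.1 + p.2 = n := mem_antidiagonal.mp hp
  have hchoose : (n + 1 + a).choose (p.2 + 1) * (p.2 + 1) =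
      (n + (a + 1)).choose p.2 * (p.1 + a + 1) := by
    rw [Nat.choose_succ_right_eq, show n + 1 + a - p.2 = p.1 + a + 1 by omega,
      show n + 1 + a = n + (a + 1) by omega]
  calc _ = (((n + 1 + a).choose (p.2 + 1) * (p.2 + 1) : ℕ) : R) * ((n + (b + 1)).choose p.1 : R) *
        U ^ p.1 * V ^ (p.2 + 1) := by
        rw [show n + 1 + b = n + (b + 1) by omega]; push_cast; ring
    _ = _ := by rw [hchoose]; push_cast; ring

theorem succ_mul_sum_antidiagonal_succ_choose :
    ((n + 1 : ℕ) : R) * ∑ p ∈ antidiagonal (n + 1),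
        ((n + 1 + a).choose p.2 : R) * ((n + 1 + b).choose p.1 : R) * U ^ p.1 * V ^ p.2 =
      ∑ p ∈ antidiagonal n, ((n + (a + 1)).choose p.2 : R) * ((n + (b + 1)).choose p.1 : R) *
        (((p.1 + a + 1 : ℕ) : R) * U ^ p.1 * V ^ (p.2 + 1)
          + ((p.2 + b + 1 : ℕ) : R) * U ^ (p.1 + 1) * V ^ p.2) := by
  have hsplit : ∀ p ∈ antidiagonal (n + 1),
      ((n + 1 : ℕ) : R) * (((n + 1 + a).choose p.2 : R) * ((n + 1 + b).choose p.1 : R) *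
        U ^ p.1 * V ^ p.2) =
      (p.1 : R) * (((n + 1 + a).choose p.2 : R) * ((n + 1 + b).choose p.1 : R) *
        U ^ p.1 * V ^ p.2) +
      (p.2 : R) * (((n + 1 + a).choose p.2 : R) * ((n + 1 + b).choose p.1 : R) *
        U ^ p.1 * V ^ p.2) := by
    intro p hp
    rw [← mem_antidiagonal.mp hp]
    push_cast
    ring
  rw [mul_sum, sum_congr rfl hsplit, sum_add_distrib, sum_antidiagonal_succ_fst_mul_choose,
    sum_antidiagonal_succ_snd_mul_choose, ← sum_add_distrib]
  exact sum_congr rfl fun p _ => by ring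

end LoweringIdentity

theorem hasDerivAt_weight_mul_jacobiP (a b n : ℕ) (x : ℝ) :
    HasDerivAt
      (fun y => ((y - 1) / 2) ^ (a + 1) * ((y + 1) / 2) ^ (b + 1) * jacobiP (a + 1) (b + 1) n y)
      ((n + 1) / 2 * (((x - 1) / 2) ^ a * ((x + 1) / 2) ^ b * jacobiP a b (n + 1) x)) x := by
  set c : ℕ × ℕ → ℝ := fun p => ((n + (a + 1)).choose p.2 : ℝ) * ((n + (b + 1)).choose p.1 : ℝ)
  have hsum : (fun y => ((y - 1) / 2) ^ (a + 1) * ((y + 1) / 2) ^ (b + 1) *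
        jacobiP (a + 1) (b + 1) n y) =
      fun y => ∑ p ∈ antidiagonal n,
        c p * (((y - 1) / 2) ^ (p.1 + a + 1) * ((y + 1) / 2) ^ (p.2 + b + 1)) := by
    funext y
    rw [jacobiP_eq_sum_antidiagonal, mul_sum]
    exact sum_congr rfl fun p _ => by ring
  rw [hsum]
  refine (HasDerivAt.fun_sum fun p _ =>
    (hasDerivAt_shifted_pow_mul_pow (p.1 + a) (p.2 + b) x).const_mul (c p)).congr_deriv ?_
  set U := (x - 1) / 2
  set V := (x + 1) / 2
  symm
  calc (n + 1) / 2 * (U ^ a * V ^ b * jacobiP a b (n + 1) x)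
      = U ^ a * V ^ b / 2 * (((n + 1 : ℕ) : ℝ) * ∑ p ∈ antidiagonal (n + 1),
          ((n + 1 + a).choose p.2 : ℝ) * ((n + 1 + b).choose p.1 : ℝ) * U ^ p.1 * V ^ p.2) := by
        rw [jacobiP_eq_sum_antidiagonal]; push_cast; ring
    _ = _ := by
        rw [succ_mul_sum_antidiagonal_succ_choose, mul_sum]
        exact sum_congr rfl fun p _ => by push_cast; ring

/-- for `n ≥ 4`, `d/dξ P_n^{(-2,-2)}(ξ) = ((n−3)/2)·P_{n−1}^{(-1,-1)}(ξ)`. -/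
theorem deriv_gJacobiM2 (n : ℕ) (hn : 4 ≤ n) (x : ℝ) :
    deriv (fun ξ : ℝ => gJacobiM2 n ξ) x = (((n : ℝ) - 3) / 2) * gJacobiM1 (n - 1) x := by
  obtain ⟨k, rfl⟩ : ∃ k, n = k + 4 := ⟨n - 4, by omega⟩
  have hweight (y : ℝ) : (y ^ 2 - 1) / 4 = (y - 1) / 2 * ((y + 1) / 2) := by ring
  have hfun : (fun ξ => gJacobiM2 (k + 4) ξ) = fun y =>
      ((y - 1) / 2) ^ (1 + 1) * ((y + 1) / 2) ^ (1 + 1) * jacobiP (1 + 1) (1 + 1) k y := by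
    funext y
    rw [gJacobiM2, hweight, Nat.add_sub_cancel]
    ring
  rw [hfun, (hasDerivAt_weight_mul_jacobiP 1 1 k x).deriv, gJacobiM1, hweight,
    show k + 4 - 1 - 2 = k + 1 by omega]
  push_cast
  ring
end

section
/- For each pair (m, n) with m, n ≥ 1, the planar vector field χ_{m,n}(ξ₁, ξ₂) = ( φ̃_{m+3}(ξ₁)·ψ_{n+2}(ξ₂), −ψ_{m+2}(ξ₁)·φ̃_{n+3}(ξ₂) ) has zero divergence on (−1,1)², where φ̃ denotes the H²-type basis function built from P^{(-2,-2)}. -/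
/-
The relation `φ̃_{m+1}' = ψ_m` turns both partial derivatives into `±ψ_{m+2}(ξ₁) ψ_{n+2}(ξ₂)`,
so they cancel. The relation itself is the Rodrigues-type identity
`d/dx [u^(a+1) v^(b+1) P_n^{(a+1,b+1)}] = (n+1)/2 · u^a v^b P_{n+1}^{(a,b)}` with `u = (x-1)/2`,
`v = (x+1)/2`: differentiating the explicit binomial sum term by term, each coefficient of
`u^(s+a) v^(n+1-s+b)` splits by `C(N, k) (N - k) = C(N, k+1) (k+1)` into weights `n+1-s` and `s`,
which add up to `n+1`.
-/

open scoped BigOperators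

open Finset

/-- The Jacobi weight `(1-x)^a (1+x)^b` is rescaled by `(-2)^(-a) 2^(-b)` here. -/
noncomputable def weightedJacobiP (a b n : ℕ) (x : ℝ) : ℝ :=
  ((x - 1) / 2) ^ a * ((x + 1) / 2) ^ b * jacobiP a b n x

lemma Nat.choose_mul_succ_eq_choose_succ_mul {N i j : ℕ} (h : i + j + 1 = N) :
    N.choose i * (j + 1) = N.choose (i + 1) * (i + 1) := by
  rw [Nat.choose_succ_right_eq, ← h, show i + j + 1 - i = j + 1 by omega]

lemma sum_range_sub_mul_add_succ_mul_succ (n : ℕ) (F : ℕ → ℝ) :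
    ∑ s ∈ range (n + 1), (((n : ℝ) + 1 - s) * F s + (s + 1) * F (s + 1)) =
      ((n : ℝ) + 1) * ∑ s ∈ range (n + 2), F s := by
  have hlow : ∑ s ∈ range (n + 2), ((n : ℝ) + 1 - s) * F s =
      ∑ s ∈ range (n + 1), ((n : ℝ) + 1 - s) * F s := by
    rw [sum_range_succ]
    simp only [Nat.cast_add, Nat.cast_one, sub_self, zero_mul, add_zero]
  have hhigh : ∑ s ∈ range (n + 2), (s : ℝ) * F s =
      ∑ s ∈ range (n + 1), ((s : ℝ) + 1) * F (s + 1) := by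
    rw [sum_range_succ']
    simp only [Nat.cast_add, Nat.cast_one, Nat.cast_zero, zero_mul, add_zero]
  rw [sum_add_distrib, ← hlow, ← hhigh, ← sum_add_distrib, mul_sum]
  exact sum_congr rfl fun s _ => by ring

lemma hasDerivAt_shiftedMonomial (i j : ℕ) (x : ℝ) :
    HasDerivAt (fun t : ℝ => ((t - 1) / 2) ^ (i + 1) * ((t + 1) / 2) ^ (j + 1))
      ((((i : ℝ) + 1) * ((x - 1) / 2) ^ i * ((x + 1) / 2) ^ (j + 1) +
        ((j : ℝ) + 1) * ((x - 1) / 2) ^ (i + 1) * ((x + 1) / 2) ^ j) / 2) x := by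
  have hu : HasDerivAt (fun t : ℝ => (t - 1) / 2) (1 / 2) x :=
    ((hasDerivAt_id x).sub_const 1).div_const 2
  have hv : HasDerivAt (fun t : ℝ => (t + 1) / 2) (1 / 2) x :=
    ((hasDerivAt_id x).add_const 1).div_const 2
  refine ((hu.fun_pow (i + 1)).fun_mul (hv.fun_pow (j + 1))).congr_deriv ?_
  simp only [Nat.add_sub_cancel]
  push_cast
  ring

theorem hasDerivAt_weightedJacobiP (a b n : ℕ) (x : ℝ) :
    HasDerivAt (weightedJacobiP (a + 1) (b + 1) n)
      (((n : ℝ) + 1) / 2 * weightedJacobiP a b (n + 1) x) x := by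
  set d : ℕ → ℝ := fun s =>
    (Nat.choose (n + 1 + a) (n + 1 - s) * Nat.choose (n + 1 + b) s : ℝ)
  set T : ℕ → ℝ := fun s => ((x - 1) / 2) ^ (s + a) * ((x + 1) / 2) ^ (n + 1 - s + b)
  have hexpand : weightedJacobiP (a + 1) (b + 1) n = fun t => ∑ s ∈ range (n + 1),
      (Nat.choose (n + (a + 1)) (n - s) * Nat.choose (n + (b + 1)) s : ℝ) *
        (((t - 1) / 2) ^ (s + a + 1) * ((t + 1) / 2) ^ (n - s + b + 1)) := by
    funext t
    rw [weightedJacobiP, jacobiP, mul_sum]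
    exact sum_congr rfl fun s _ => by ring
  have hderiv : HasDerivAt (weightedJacobiP (a + 1) (b + 1) n)
      (∑ s ∈ range (n + 1),
        (((n : ℝ) + 1 - s) * (d s * T s) + (s + 1) * (d (s + 1) * T (s + 1))) / 2) x := by
    rw [hexpand]
    refine HasDerivAt.fun_sum fun s hs =>
      ((hasDerivAt_shiftedMonomial (s + a) (n - s + b) x).const_mul _).congr_deriv ?_
    obtain ⟨r, rfl⟩ : ∃ r, n = s + r := ⟨n - s, by have := mem_range.mp hs; omega⟩
    have hA : (Nat.choose (s + r + 1 + a) r * (s + a + 1) : ℝ) =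
        Nat.choose (s + r + 1 + a) (r + 1) * (r + 1) := by
      exact_mod_cast Nat.choose_mul_succ_eq_choose_succ_mul (by omega)
    have hB : (Nat.choose (s + r + 1 + b) s * (r + b + 1) : ℝ) =
        Nat.choose (s + r + 1 + b) (s + 1) * (s + 1) := by
      exact_mod_cast Nat.choose_mul_succ_eq_choose_succ_mul (by omega)
    simp only [d, T, Nat.add_sub_cancel_left, show s + r + 1 - s = r + 1 by omega,
      show s + r + 1 - (s + 1) = r by omega, show s + r + (a + 1) = s + r + 1 + a by omega,
      show s + r + (b + 1) = s + r + 1 + b by omega]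
    push_cast
    linear_combination
      (Nat.choose (s + r + 1 + b) s * ((x - 1) / 2) ^ (s + a) * ((x + 1) / 2) ^ (r + b + 1) / 2 : ℝ)
        * hA +
      (Nat.choose (s + r + 1 + a) r * ((x - 1) / 2) ^ (s + a + 1) * ((x + 1) / 2) ^ (r + b) / 2 : ℝ)
        * hB
  have htelescope := sum_range_sub_mul_add_succ_mul_succ n fun s => d s * T s
  beta_reduce at htelescope
  refine hderiv.congr_deriv ?_
  rw [← sum_div, htelescope, weightedJacobiP, jacobiP, mul_sum, mul_sum, mul_sum, sum_div]
  exact sum_congr rfl fun s _ => by simp only [d, T]; ring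

lemma hasDerivAt_gJacobiM2 (k : ℕ) (x : ℝ) :
    HasDerivAt (gJacobiM2 (k + 4)) (((k : ℝ) + 1) / 2 * gJacobiM1 (k + 3) x) x := by
  have hM2 : gJacobiM2 (k + 4) = weightedJacobiP (1 + 1) (1 + 1) k := by
    funext t
    simp only [gJacobiM2, weightedJacobiP, Nat.add_sub_cancel]
    ring
  have hM1 : gJacobiM1 (k + 3) x = weightedJacobiP 1 1 (k + 1) x := by
    simp only [gJacobiM1, weightedJacobiP, show k + 3 - 2 = k + 1 by omega]
    ring
  rw [hM2, hM1]
  exact hasDerivAt_weightedJacobiP 1 1 k x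

theorem hasDerivAt_varphiF_succ {m : ℕ} (hm : 3 ≤ m) (x : ℝ) :
    HasDerivAt (varphiF (m + 1)) (psiF m x) x := by
  obtain ⟨k, rfl⟩ : ∃ k, m = k + 3 := ⟨m - 3, by omega⟩
  have hsqrt :
      √(8 * (2 * ((k + 3 + 1 : ℕ) : ℝ) - 3)) = 2 * √(2 * (2 * ((k + 3 : ℕ) : ℝ) - 1)) := by
    rw [show 8 * (2 * ((k + 3 + 1 : ℕ) : ℝ) - 3) = 2 ^ 2 * (2 * (2 * ((k + 3 : ℕ) : ℝ) - 1)) by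
      push_cast; ring, Real.sqrt_mul (by positivity), Real.sqrt_sq zero_le_two]
  refine ((hasDerivAt_gJacobiM2 k x).const_mul _).congr_deriv ?_
  rw [psiF, hsqrt]
  push_cast
  rw [show (k : ℝ) + 3 + 1 - 3 = k + 1 by ring, show (k : ℝ) + 3 + 1 - 2 = k + 2 by ring,
    show (k : ℝ) + 3 - 1 = k + 2 by ring]
  field_simp

theorem chi_div_free_general (m n : ℕ) (hm : 1 ≤ m) (hn : 1 ≤ n) (ξ₁ ξ₂ : ℝ) :
    deriv (fun t : ℝ => varphiF (m + 3) t * psiF (n + 2) ξ₂) ξ₁ +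
      deriv (fun t : ℝ => -(psiF (m + 2) ξ₁ * varphiF (n + 3) t)) ξ₂ = 0 := by
  rw [((hasDerivAt_varphiF_succ (m := m + 2) (by omega) ξ₁).mul_const _).deriv,
    ((hasDerivAt_varphiF_succ (m := n + 2) (by omega) ξ₂).const_mul _).fun_neg.deriv]
  ring

/-- for `m, n ≥ 1`, the planar vector field
`χ_{m,n}(ξ₁,ξ₂) = (φ̃_{m+3}(ξ₁)ψ_{n+2}(ξ₂), −ψ_{m+2}(ξ₁)φ̃_{n+3}(ξ₂))`
has zero divergence on `(−1,1)²`. -/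
theorem chi_div_free (m n : ℕ) (hm : 1 ≤ m) (hn : 1 ≤ n) (ξ₁ ξ₂ : ℝ)
    (h₁ : ξ₁ ∈ Set.Ioo (-1 : ℝ) 1) (h₂ : ξ₂ ∈ Set.Ioo (-1 : ℝ) 1) :
    deriv (fun t : ℝ => varphiF (m + 3) t * psiF (n + 2) ξ₂) ξ₁ +
      deriv (fun t : ℝ => -(psiF (m + 2) ξ₁ * varphiF (n + 3) t)) ξ₂ = 0 :=
  chi_div_free_general m n hm hn ξ₁ ξ₂
end

section
/- With ψ₂(ξ) = (L₂(ξ) − L₀(ξ))/√6 and ψ_{m+2}(ξ) = (1/(2c_{m+1}))·(L_{m+2}(ξ) − L_m(ξ)), the vector H̃ with entries H̃_m = ∫_{−1}^{1} ψ₂(ξ)ψ_{m+2}(ξ) dξ for 1 ≤ m ≤ N−3 satisfies H̃_2 = −√3/(15√7) and H̃_m = 0 for all m ≠ 2. -/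
open scoped BigOperators

/-- `c_n = √(2(2n+1))/2`. -/
noncomputable def cConst (n : ℕ) : ℝ := Real.sqrt (2 * (2 * (n : ℝ) + 1)) / 2

/-- `ψ_{m+2}(ξ) = (1/(2c_{m+1}))·(L_{m+2}(ξ) − L_m(ξ))`. -/
noncomputable def psiL (m : ℕ) (ξ : ℝ) : ℝ :=
  (1 / (2 * cConst (m + 1))) * (legendreP (m + 2) ξ - legendreP m ξ)

/-- `ψ₂(ξ) = (L₂(ξ) − L₀(ξ))/√6`. -/
noncomputable def psi2 (ξ : ℝ) : ℝ := (legendreP 2 ξ - legendreP 0 ξ) / Real.sqrt 6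

/-!
Both `ψ₂` and `ψ_{m+2}` are differences of Legendre polynomials, so the integral expands into
four Legendre inner products. Orthogonality comes from Rodrigues' formula
`2ⁿ n! Lₙ = Dⁿ (x² - 1)ⁿ`: integrating by parts `n` times against a polynomial of degree `< n`
kills it, the boundary terms vanishing because `(x² - 1)ⁿ` has zeros of order `n` at `±1`.
As `m ≥ 1`, only `-∫ L₂ Lₘ` survives, and it is nonzero only for `m = 2`, where `∫ L₂² = 2/5`.
-/

open Polynomial
open scoped Nat

noncomputable def rodriguesPoly (n : ℕ) : ℝ[X] := (X - C 1) ^ n * (X + C 1) ^ n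

lemma eval_iterate_derivative_rodriguesPoly (n : ℕ) (x : ℝ) :
    (derivative^[n] (rodriguesPoly n)).eval x = 2 ^ n * n ! * legendreP n x := by
  rw [rodriguesPoly, iterate_derivative_mul, legendreP, jacobiP, eval_finsetSum, Finset.mul_sum]
  refine Finset.sum_congr rfl fun k hk => ?_
  have hk : k ≤ n := Nat.lt_succ_iff.mp (Finset.mem_range.mp hk)
  have hcoeff : (n.choose k * n.descFactorial k * n.descFactorial (n - k) : ℝ) =
      n ! * n.choose k * n.choose k := by
    rw [Nat.descFactorial_eq_factorial_mul_choose, Nat.descFactorial_eq_factorial_mul_choose,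
      Nat.choose_symm hk, ← Nat.choose_mul_factorial_mul_factorial hk]
    push_cast
    ring
  have htwo : (2 : ℝ) ^ n = 2 ^ k * 2 ^ (n - k) := by rw [← pow_add, Nat.add_sub_cancel' hk]
  rw [iterate_derivative_X_sub_pow, iterate_derivative_X_add_pow, Nat.sub_sub_self hk]
  simp only [nsmul_eq_mul, eval_mul, eval_natCast, eval_pow, eval_sub, eval_add, eval_X, eval_C,
    Nat.add_zero]
  rw [div_pow, div_pow, htwo, Nat.choose_symm hk]
  field_simp
  linear_combination ((x - 1) ^ k * (x + 1) ^ (n - k)) * hcoeff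

lemma eval_iterate_derivative_rodriguesPoly_of_lt {n i : ℕ} (hi : i < n) :
    (derivative^[i] (rodriguesPoly n)).eval 1 = 0 ∧
      (derivative^[i] (rodriguesPoly n)).eval (-1) = 0 := by
  rw [rodriguesPoly, iterate_derivative_mul]
  constructor <;>
  · rw [eval_finsetSum]
    refine Finset.sum_eq_zero fun k hk => ?_
    have hk : k ≤ i := Nat.lt_succ_iff.mp (Finset.mem_range.mp hk)
    rw [iterate_derivative_X_sub_pow, iterate_derivative_X_add_pow]
    simp [zero_pow (Nat.sub_ne_zero_of_lt (by omega : i - k < n)),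
      zero_pow (Nat.sub_ne_zero_of_lt (by omega : k < n))]

lemma integral_eval_mul_eval_derivative (p q : ℝ[X]) (a b : ℝ) :
    ∫ x in a..b, p.eval x * (derivative q).eval x =
      p.eval b * q.eval b - p.eval a * q.eval a -
        ∫ x in a..b, (derivative p).eval x * q.eval x :=
  intervalIntegral.integral_mul_deriv_eq_deriv_mul (fun x _ => p.hasDerivAt x)
    (fun x _ => q.hasDerivAt x) ((derivative p).continuous.intervalIntegrable _ _)
    ((derivative q).continuous.intervalIntegrable _ _)

lemma integral_eval_mul_iterate_derivative_rodriguesPoly (p : ℝ[X]) {n k : ℕ} (hk : k ≤ n) :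
    ∫ x in (-1 : ℝ)..1, p.eval x * (derivative^[n] (rodriguesPoly n)).eval x =
      (-1) ^ k * ∫ x in (-1 : ℝ)..1,
        (derivative^[k] p).eval x * (derivative^[n - k] (rodriguesPoly n)).eval x := by
  induction k with
  | zero => simp
  | succ k ih =>
    obtain ⟨h1, h2⟩ := eval_iterate_derivative_rodriguesPoly_of_lt (n := n) (i := n - (k + 1))
      (by omega)
    rw [ih (by omega), show n - k = n - (k + 1) + 1 by omega, Function.iterate_succ_apply',
      integral_eval_mul_eval_derivative, h1, h2, Function.iterate_succ_apply']
    ring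

noncomputable def legendrePoly (n : ℕ) : ℝ[X] :=
  C ((2 ^ n * n ! : ℝ)⁻¹) * derivative^[n] (rodriguesPoly n)

lemma eval_legendrePoly (n : ℕ) (x : ℝ) : (legendrePoly n).eval x = legendreP n x := by
  rw [legendrePoly, eval_mul, eval_C, eval_iterate_derivative_rodriguesPoly]
  field_simp

lemma natDegree_legendrePoly_le (n : ℕ) : (legendrePoly n).natDegree ≤ n := by
  have hR : (rodriguesPoly n).natDegree ≤ 2 * n := by
    unfold rodriguesPoly
    compute_degree
    omega
  calc (legendrePoly n).natDegree ≤ (derivative^[n] (rodriguesPoly n)).natDegree :=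
        natDegree_C_mul_le _ _
    _ ≤ (rodriguesPoly n).natDegree - n := natDegree_iterate_derivative _ _
    _ ≤ n := by omega

lemma continuous_legendreP (n : ℕ) : Continuous (legendreP n) := by
  simpa only [eval_legendrePoly] using (legendrePoly n).continuous

lemma integral_eval_mul_legendreP_of_natDegree_lt {p : ℝ[X]} {n : ℕ} (hp : p.natDegree < n) :
    ∫ x in (-1 : ℝ)..1, p.eval x * legendreP n x = 0 := by
  have hR : ∫ x in (-1 : ℝ)..1, p.eval x * (derivative^[n] (rodriguesPoly n)).eval x = 0 := by
    rw [integral_eval_mul_iterate_derivative_rodriguesPoly p le_rfl, iterate_derivative_eq_zero hp]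
    simp
  simp_rw [← eval_legendrePoly, legendrePoly, eval_mul, eval_C, mul_left_comm (p.eval _),
    intervalIntegral.integral_const_mul, hR, mul_zero]

lemma integral_legendreP_mul_legendreP_of_lt {m n : ℕ} (hmn : m < n) :
    ∫ x in (-1 : ℝ)..1, legendreP m x * legendreP n x = 0 := by
  simpa only [eval_legendrePoly] using
    integral_eval_mul_legendreP_of_natDegree_lt ((natDegree_legendrePoly_le m).trans_lt hmn)

lemma integral_legendreP_mul_legendreP_of_ne {m n : ℕ} (hmn : m ≠ n) :
    ∫ x in (-1 : ℝ)..1, legendreP m x * legendreP n x = 0 := by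
  rcases hmn.lt_or_gt with h | h
  · exact integral_legendreP_mul_legendreP_of_lt h
  · simpa only [mul_comm] using integral_legendreP_mul_legendreP_of_lt h

lemma legendreP_two (x : ℝ) : legendreP 2 x = (3 * x ^ 2 - 1) / 2 := by
  simp only [legendreP, jacobiP, Finset.sum_range_succ, Finset.sum_range_zero]
  norm_num
  ring

lemma integral_legendreP_two_mul_self :
    ∫ x in (-1 : ℝ)..1, legendreP 2 x * legendreP 2 x = 2 / 5 := by
  have h : ∀ x : ℝ, legendreP 2 x * legendreP 2 x = 9 / 4 * x ^ 4 - 3 / 2 * x ^ 2 + 1 / 4 := by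
    intro x
    rw [legendreP_two]
    ring
  simp_rw [h]
  rw [intervalIntegral.integral_add, intervalIntegral.integral_sub,
    intervalIntegral.integral_const_mul, intervalIntegral.integral_const_mul,
    integral_pow, integral_pow, intervalIntegral.integral_const]
  all_goals norm_num

lemma integral_legendreP_sub_mul_legendreP_sub (a b c d : ℕ) :
    ∫ x in (-1 : ℝ)..1, (legendreP a x - legendreP b x) * (legendreP c x - legendreP d x) =
      (∫ x in (-1 : ℝ)..1, legendreP a x * legendreP c x) -
        (∫ x in (-1 : ℝ)..1, legendreP a x * legendreP d x) -
        (∫ x in (-1 : ℝ)..1, legendreP b x * legendreP c x) +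
        ∫ x in (-1 : ℝ)..1, legendreP b x * legendreP d x := by
  have hint (i j : ℕ) :
      IntervalIntegrable (fun x => legendreP i x * legendreP j x) MeasureTheory.volume (-1) 1 :=
    ((continuous_legendreP i).mul (continuous_legendreP j)).intervalIntegrable _ _
  simp_rw [sub_mul, mul_sub]
  rw [intervalIntegral.integral_sub ((hint a c).sub (hint a d)) ((hint b c).sub (hint b d)),
    intervalIntegral.integral_sub (hint a c) (hint a d),
    intervalIntegral.integral_sub (hint b c) (hint b d)]
  ring

lemma inv_sqrt_six_mul_inv_two_mul_cConst_three :
    (Real.sqrt 6)⁻¹ * (2 * cConst 3)⁻¹ * (2 / 5) = Real.sqrt 3 / (15 * Real.sqrt 7) := by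
  have hc : 2 * cConst 3 = Real.sqrt 2 * Real.sqrt 7 := by
    rw [cConst, ← Real.sqrt_mul zero_le_two]
    norm_num
    ring
  have h6 : Real.sqrt 6 = Real.sqrt 2 * Real.sqrt 3 := by
    rw [← Real.sqrt_mul zero_le_two]
    norm_num
  have h2 : Real.sqrt 2 * Real.sqrt 2 = 2 := Real.mul_self_sqrt zero_le_two
  have h3 : Real.sqrt 3 * Real.sqrt 3 = 3 := Real.mul_self_sqrt zero_le_three
  rw [hc, h6]
  field_simp
  linear_combination -5 * Real.sqrt 2 ^ 2 * h3 - 15 * h2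

theorem Htilde_entries_general (m : ℕ) (hm1 : 1 ≤ m) :
    (∫ ξ in (-1 : ℝ)..1, psi2 ξ * psiL m ξ) =
      if m = 2 then -(Real.sqrt 3 / (15 * Real.sqrt 7)) else 0 := by
  have hpsi : ∀ ξ, psi2 ξ * psiL m ξ = (Real.sqrt 6)⁻¹ * (2 * cConst (m + 1))⁻¹ *
      ((legendreP 2 ξ - legendreP 0 ξ) * (legendreP (m + 2) ξ - legendreP m ξ)) := by
    intro ξ
    rw [psi2, psiL]
    ring
  simp_rw [hpsi]
  rw [intervalIntegral.integral_const_mul, integral_legendreP_sub_mul_legendreP_sub,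
    integral_legendreP_mul_legendreP_of_ne (show 2 ≠ m + 2 by omega),
    integral_legendreP_mul_legendreP_of_ne (show 0 ≠ m + 2 by omega),
    integral_legendreP_mul_legendreP_of_ne (show 0 ≠ m by omega)]
  split_ifs with hm
  · subst hm
    rw [integral_legendreP_two_mul_self, ← inv_sqrt_six_mul_inv_two_mul_cConst_three]
    ring
  · rw [integral_legendreP_mul_legendreP_of_ne (Ne.symm hm)]
    ring

/-- the vector `H̃_m = ∫_{−1}^1 ψ₂ ψ_{m+2} dξ` (for `1 ≤ m ≤ N−3`)
satisfies `H̃_2 = −√3/(15√7)` and `H̃_m = 0` for `m ≠ 2`. -/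
theorem Htilde_entries (N m : ℕ) (hm1 : 1 ≤ m) (hmN : m ≤ N - 3) :
    (∫ ξ in (-1 : ℝ)..1, psi2 ξ * psiL m ξ) =
      if m = 2 then -(Real.sqrt 3 / (15 * Real.sqrt 7)) else 0 :=
  Htilde_entries_general m hm1
end
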